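/- arXiv:2407.07737 — 5 statements merged into one kernel-verified Lean document; each statement's English description precedes it below -/
import Mathlib

section
/- Rényi divergence of shifted Gaussians: for μ ∈ ℝ, σ > 0, and α > 1, the α-Rényi divergence R_α(N(μ, σ²), N(0, σ²)) equals α μ²/(2σ²). -/
open MeasureTheory ProbabilityTheory Real
open scoped NNReal

/-! Completing the square, `q · (p / q) ^ α` for `p = N(μ, v)`, `q = N(ν, v)` is
`exp (α (α - 1) (μ - ν)² / (2 v))` times the density of `N(ν + α (μ - ν), v)`, so
`E_q[(p / q) ^ α] = exp (α (α - 1) (μ - ν)² / (2 v))`. -/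

namespace ProbabilityTheory

variable {v : ℝ≥0}

lemma gaussianPDFReal_div_gaussianPDFReal (hv : v ≠ 0) (μ ν x : ℝ) :
    gaussianPDFReal μ v x / gaussianPDFReal ν v x =
      exp (((x - ν) ^ 2 - (x - μ) ^ 2) / (2 * v)) := by
  have hnorm : (√(2 * π * v))⁻¹ ≠ 0 := by
    have : (0 : ℝ) < v := by positivity
    positivity
  rw [gaussianPDFReal, gaussianPDFReal, mul_div_mul_left _ _ hnorm, ← exp_sub]
  ring_nf

lemma gaussianPDFReal_mul_rpow_div_gaussianPDFReal (hv : v ≠ 0) (μ ν α x : ℝ) :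
    gaussianPDFReal ν v x * (gaussianPDFReal μ v x / gaussianPDFReal ν v x) ^ α =
      exp (α * (α - 1) * (μ - ν) ^ 2 / (2 * v)) * gaussianPDFReal (ν + α * (μ - ν)) v x := by
  rw [gaussianPDFReal_div_gaussianPDFReal hv, ← exp_mul, gaussianPDFReal, gaussianPDFReal,
    mul_assoc, ← exp_add, mul_left_comm (exp _), ← exp_add]
  congr 2
  ring

lemma integral_rpow_gaussianPDFReal_div_gaussianPDFReal (hv : v ≠ 0) (μ ν α : ℝ) :
    ∫ x, (gaussianPDFReal μ v x / gaussianPDFReal ν v x) ^ α ∂(gaussianReal ν v) =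
      exp (α * (α - 1) * (μ - ν) ^ 2 / (2 * v)) := by
  simp only [integral_gaussianReal_eq_integral_smul hv, smul_eq_mul,
    gaussianPDFReal_mul_rpow_div_gaussianPDFReal hv, integral_const_mul,
    integral_gaussianPDFReal_eq_one _ hv, mul_one]

lemma one_div_sub_one_mul_log_integral_rpow_gaussianPDFReal_div (hv : v ≠ 0) (μ ν : ℝ)
    {α : ℝ} (hα : α ≠ 1) :
    1 / (α - 1) * log (∫ x, (gaussianPDFReal μ v x / gaussianPDFReal ν v x) ^ α
      ∂(gaussianReal ν v)) = α * (μ - ν) ^ 2 / (2 * v) := by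
  rw [integral_rpow_gaussianPDFReal_div_gaussianPDFReal hv, log_exp]
  have hα1 : α - 1 ≠ 0 := sub_ne_zero.mpr hα
  field_simp

end ProbabilityTheory

/-- Rényi divergence of shifted Gaussians:
`R_α(N(μ, σ²), N(0, σ²)) = α μ² / (2 σ²)` for `α > 1`. -/
theorem renyi_gaussian_shift (μ σ : ℝ) (hσ : 0 < σ) (α : ℝ) (hα : 1 < α) :
    (1 / (α - 1)) * Real.log (∫ x,
        (gaussianPDFReal μ ⟨σ ^ 2, sq_nonneg σ⟩ x /
          gaussianPDFReal 0 ⟨σ ^ 2, sq_nonneg σ⟩ x) ^ α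
        ∂(gaussianReal 0 ⟨σ ^ 2, sq_nonneg σ⟩)) =
      α * μ ^ 2 / (2 * σ ^ 2) := by
  set v : ℝ≥0 := ⟨σ ^ 2, sq_nonneg σ⟩
  have hv : v ≠ 0 := NNReal.coe_ne_zero.mp (pow_pos hσ 2).ne'
  rw [one_div_sub_one_mul_log_integral_rpow_gaussianPDFReal_div hv _ _ hα.ne', sub_zero]
  rfl
end

section
/- Closed-form Rényi divergence of a Bernoulli-mixture-of-Gaussians versus a Gaussian: for integer α > 1, p ∈ [0,1], and σ > 0, exp((α−1) R_α(N(Bern(p), σ²), N(0, σ²))) = E_{c_1,…,c_α i.i.d. Bern(p)}[ exp( (Σ_{i≠i'} c_i c_{i'}) / (2σ²) ) ], where N(Bern(p), σ²) denotes the mixture (1−p)·N(0,σ²) + p·N(1,σ²). -/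
/-!
Dividing by the density of `N(0, v)`, the likelihood ratio of the mixture is `1 - p + p L`, where
`L x = exp ((2x - 1) / (2v))` is the likelihood ratio of `N(1, v)` to `N(0, v)`. Expanding the
`α`-th power over `c ∈ {0,1}^α` weights `L ^ k`, `k = ∑ cᵢ`, by Bernoulli probabilities, and the
Gaussian moment generating function gives `E[L ^ k] = exp ((k² - k) / (2v))`. Since `cᵢ² = cᵢ`,
`k² - k = ∑_{i ≠ i'} cᵢ cᵢ'`.
-/
open MeasureTheory ProbabilityTheory Real
open scoped NNReal

section GaussianLikelihoodRatio

variable {v : ℝ≥0}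

lemma gaussianPDFReal_div_gaussianPDFReal_zero (hv : v ≠ 0) (μ x : ℝ) :
    gaussianPDFReal μ v x / gaussianPDFReal 0 v x = exp (μ / v * x - μ ^ 2 / (2 * v)) := by
  have hv' : (v : ℝ) ≠ 0 := NNReal.coe_ne_zero.mpr hv
  rw [gaussianPDFReal, gaussianPDFReal, mul_div_mul_left _ _ (by positivity), ← exp_sub]
  congr 1
  field_simp
  ring

lemma gaussianPDFReal_div_gaussianPDFReal_zero_pow (hv : v ≠ 0) (μ : ℝ) (k : ℕ) (x : ℝ) :
    (gaussianPDFReal μ v x / gaussianPDFReal 0 v x) ^ k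
      = exp (-(k * μ ^ 2 / (2 * v))) * exp (k * μ / v * x) := by
  rw [gaussianPDFReal_div_gaussianPDFReal_zero hv, ← exp_nat_mul, ← exp_add]
  ring_nf

lemma integrable_gaussianPDFReal_div_gaussianPDFReal_zero_pow (hv : v ≠ 0) (μ : ℝ) (k : ℕ) :
    Integrable (fun x ↦ (gaussianPDFReal μ v x / gaussianPDFReal 0 v x) ^ k)
      (gaussianReal 0 v) := by
  simp_rw [gaussianPDFReal_div_gaussianPDFReal_zero_pow hv]
  exact (integrable_exp_mul_gaussianReal _).const_mul _

lemma integral_gaussianPDFReal_div_gaussianPDFReal_zero_pow (hv : v ≠ 0) (μ : ℝ) (k : ℕ) :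
    ∫ x, (gaussianPDFReal μ v x / gaussianPDFReal 0 v x) ^ k ∂gaussianReal 0 v
      = exp ((k ^ 2 - k) * μ ^ 2 / (2 * v)) := by
  have hv' : (v : ℝ) ≠ 0 := NNReal.coe_ne_zero.mpr hv
  have hmgf := congrFun (mgf_fun_id_gaussianReal (μ := 0) (v := v)) (k * μ / v)
  simp_rw [gaussianPDFReal_div_gaussianPDFReal_zero_pow hv, integral_const_mul]
  rw [mgf] at hmgf
  rw [hmgf, ← exp_add]
  congr 1
  field_simp
  ring

end GaussianLikelihoodRatio

section BernoulliExpansion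

variable {R : Type*}

lemma add_mul_pow_eq_sum_fin_two [CommSemiring R] (a b y : R) (n : ℕ) :
    (a + b * y) ^ n
      = ∑ c : Fin n → Fin 2, (∏ i, if c i = 1 then b else a) * y ^ ∑ i, (c i : ℕ) := by
  have hsum : a + b * y = ∑ j : Fin 2, (if j = 1 then b else a) * y ^ (j : ℕ) := by
    simp [Fin.sum_univ_two]
  rw [hsum, Fintype.sum_pow]
  simp_rw [Finset.prod_mul_distrib, Finset.prod_pow_eq_pow_sum]

lemma sum_prod_bernoulli_eq_one [CommRing R] (p : R) (n : ℕ) :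
    ∑ c : Fin n → Fin 2, ∏ i, (if c i = 1 then p else 1 - p) = 1 := by
  simpa using (add_mul_pow_eq_sum_fin_two (1 - p) p 1 n).symm

lemma sum_sum_ite_ne_mul {ι : Type*} [Fintype ι] [DecidableEq ι] [CommRing R] (f : ι → R) :
    ∑ i, ∑ j, (if i ≠ j then f i * f j else 0) = (∑ i, f i) ^ 2 - ∑ i, f i ^ 2 := by
  have hdiag (i j : ι) :
      (if i ≠ j then f i * f j else 0) = f i * f j - if i = j then f i * f j else 0 := by
    split_ifs <;> simp_all
  simp_rw [hdiag, Finset.sum_sub_distrib, Finset.sum_ite_eq, Finset.mem_univ, if_true, sq,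
    Finset.sum_mul_sum]

end BernoulliExpansion

variable {v : ℝ≥0}

lemma integral_bernoulli_mixture_div_gaussianPDFReal_zero_rpow (hv : v ≠ 0) (p μ : ℝ) (n : ℕ) :
    ∫ x, (((1 - p) * gaussianPDFReal 0 v x + p * gaussianPDFReal μ v x) /
        gaussianPDFReal 0 v x) ^ (n : ℝ) ∂gaussianReal 0 v
      = ∑ c : Fin n → Fin 2, (∏ i, if c i = 1 then p else 1 - p) *
          exp ((∑ i, ∑ i', if i ≠ i' then ((c i : ℕ) : ℝ) * ((c i' : ℕ) : ℝ) else 0) *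
            μ ^ 2 / (2 * v)) := by
  have hmix (x : ℝ) : ((1 - p) * gaussianPDFReal 0 v x + p * gaussianPDFReal μ v x) /
      gaussianPDFReal 0 v x = (1 - p) + p * (gaussianPDFReal μ v x / gaussianPDFReal 0 v x) := by
    field_simp [(gaussianPDFReal_pos 0 v x hv).ne']
  simp_rw [hmix, rpow_natCast, add_mul_pow_eq_sum_fin_two]
  rw [integral_finsetSum _ fun c _ ↦
    (integrable_gaussianPDFReal_div_gaussianPDFReal_zero_pow hv μ _).const_mul _]
  refine Finset.sum_congr rfl fun c _ ↦ ?_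
  have hidem (b : Fin 2) : ((b : ℕ) : ℝ) ^ 2 = b := by fin_cases b <;> simp
  rw [integral_const_mul, integral_gaussianPDFReal_div_gaussianPDFReal_zero_pow hv,
    sum_sum_ite_ne_mul, Finset.sum_congr rfl fun i _ ↦ hidem (c i), Nat.cast_sum]

lemma one_le_sum_bernoulli_mul_exp {p : ℝ} (hp0 : 0 ≤ p) (hp1 : p ≤ 1) {n : ℕ}
    (s : (Fin n → Fin 2) → ℝ) (hs : ∀ c, 0 ≤ s c) :
    1 ≤ ∑ c : Fin n → Fin 2, (∏ i, if c i = 1 then p else 1 - p) * exp (s c) := by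
  refine (sum_prod_bernoulli_eq_one p n).ge.trans
    (Finset.sum_le_sum fun c _ ↦ le_mul_of_one_le_right ?_ (one_le_exp (hs c)))
  exact Finset.prod_nonneg fun i _ ↦ by split_ifs <;> linarith

/-- Closed form for `exp((α−1) R_α(N(Bern(p), σ²), N(0, σ²)))` for integer `α > 1`,
where `N(Bern(p), σ²) = (1−p)·N(0,σ²) + p·N(1,σ²)`:
it equals `E_{c₁,…,c_α i.i.d. Bern(p)}[exp((Σ_{i≠i'} c_i c_{i'})/(2σ²))]`. -/
theorem renyi_bernoulli_mixture_closed_form (α : ℕ) (hα : 1 < α)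
    (p : ℝ) (hp0 : 0 ≤ p) (hp1 : p ≤ 1) (σ : ℝ) (hσ : 0 < σ) :
    Real.exp (((α : ℝ) - 1) * ((1 / ((α : ℝ) - 1)) * Real.log (∫ x,
        (((1 - p) * gaussianPDFReal 0 ⟨σ ^ 2, sq_nonneg σ⟩ x +
            p * gaussianPDFReal 1 ⟨σ ^ 2, sq_nonneg σ⟩ x) /
          gaussianPDFReal 0 ⟨σ ^ 2, sq_nonneg σ⟩ x) ^ (α : ℝ)
        ∂(gaussianReal 0 ⟨σ ^ 2, sq_nonneg σ⟩)))) =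
      ∑ c : Fin α → Fin 2, (∏ i, if c i = 1 then p else 1 - p) *
        Real.exp ((∑ i, ∑ i', if i ≠ i' then
            ((c i : ℕ) : ℝ) * ((c i' : ℕ) : ℝ) else 0) / (2 * σ ^ 2)) := by
  have hv : (⟨σ ^ 2, sq_nonneg σ⟩ : ℝ≥0) ≠ 0 := fun h ↦
    (pow_pos hσ 2).ne' (congrArg NNReal.toReal h)
  have hα' : (α : ℝ) - 1 ≠ 0 := sub_ne_zero.mpr (by exact_mod_cast hα.ne')
  rw [integral_bernoulli_mixture_div_gaussianPDFReal_zero_rpow hv, ← mul_assoc,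
    mul_one_div_cancel hα', one_mul, exp_log]
  · simp only [one_pow, mul_one]
    rfl
  · refine zero_lt_one.trans_le (one_le_sum_bernoulli_mul_exp hp0 hp1 _ fun c ↦ ?_)
    refine div_nonneg (mul_nonneg (Finset.sum_nonneg fun i _ ↦ Finset.sum_nonneg fun j _ ↦ ?_)
      (sq_nonneg _)) (mul_nonneg zero_le_two (NNReal.coe_nonneg _))
    split_ifs <;> positivity
end

section
/- Closed-form Rényi divergence of a binomial mixture of Gaussians: for integers α > 1 and K ≥ 1, p ∈ [0,1], σ > 0, letting P_K = Σ_{c=0}^{K} Pr[Bin(K,p)=c] · N(c, σ²) and Q = N(0, σ²), one has exp((α−1) R_α(P_K, Q)) = E_{c_1,…,c_α i.i.d. Bin(K,p)}[ exp( ((Σ_i c_i)² − Σ_i c_i²) / (2σ²) ) ]. -/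
/-!
The likelihood ratio of `N(c, v)` to `N(0, v)` is `x ↦ exp (c x / v - c² / (2 v))`. Raising the
mixture ratio to the power `α` and expanding gives a sum over `α`-tuples `(c₁, …, c_α)` of
exponentials of affine functions of `x`, each of which integrates against `N(0, v)` by the
Gaussian moment generating function to `exp (((Σ cᵢ)² - Σ cᵢ²) / (2 v))`. The resulting sum is
positive, so `exp ∘ log` cancels.
-/

open MeasureTheory ProbabilityTheory Real
open scoped NNReal

namespace ProbabilityTheory

variable {v : ℝ≥0}

lemma gaussianPDFReal_div_gaussianPDFReal_zero (hv : v ≠ 0) (μ x : ℝ) :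
    gaussianPDFReal μ v x / gaussianPDFReal 0 v x = exp (μ / v * x - μ ^ 2 / (2 * v)) := by
  have hv' : (v : ℝ) ≠ 0 := NNReal.coe_ne_zero.mpr hv
  rw [gaussianPDFReal, gaussianPDFReal, mul_div_mul_left _ _ (by positivity), ← exp_sub]
  congr 1
  field_simp
  ring

lemma integral_exp_affine_gaussianReal_zero (a b : ℝ) :
    ∫ x, exp (a * x + b) ∂gaussianReal 0 v = exp (v * a ^ 2 / 2 + b) := by
  simp_rw [exp_add, integral_mul_const]
  congr 1
  simpa [mgf] using congrFun (mgf_id_gaussianReal (μ := 0) (v := v)) a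

lemma integral_gaussianMixture_div_gaussianPDFReal_zero_pow (hv : v ≠ 0) (α : ℕ) {ι : Type*}
    [Fintype ι] (w m : ι → ℝ) :
    ∫ x, ((∑ c, w c * gaussianPDFReal (m c) v x) / gaussianPDFReal 0 v x) ^ α ∂gaussianReal 0 v =
      ∑ q : Fin α → ι,
        (∏ i, w (q i)) * exp (((∑ i, m (q i)) ^ 2 - ∑ i, m (q i) ^ 2) / (2 * v)) := by
  have hv' : (v : ℝ) ≠ 0 := NNReal.coe_ne_zero.mpr hv
  have hexpand : ∀ x, ((∑ c, w c * gaussianPDFReal (m c) v x) / gaussianPDFReal 0 v x) ^ α =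
      ∑ q : Fin α → ι, (∏ i, w (q i)) *
        exp ((∑ i, m (q i)) / v * x + -(∑ i, m (q i) ^ 2) / (2 * v)) := by
    intro x
    simp_rw [Finset.sum_div, mul_div_assoc, gaussianPDFReal_div_gaussianPDFReal_zero hv,
      Fintype.sum_pow, Finset.prod_mul_distrib, ← exp_sum]
    refine Finset.sum_congr rfl fun q _ => ?_
    congr 2
    rw [Finset.sum_sub_distrib, ← Finset.sum_mul, ← Finset.sum_div, ← Finset.sum_div]
    ring
  simp_rw [hexpand]
  rw [integral_finsetSum _ fun q _ => ?_]
  · refine Finset.sum_congr rfl fun q _ => ?_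
    rw [integral_const_mul, integral_exp_affine_gaussianReal_zero]
    congr 2
    field_simp
    ring
  · simp_rw [exp_add]
    exact ((integrable_exp_mul_gaussianReal _).mul_const _).const_mul _

end ProbabilityTheory

lemma sum_pi_prod_mul_pos {ι κ : Type*} [Fintype ι] [DecidableEq ι] [Fintype κ] {w : κ → ℝ}
    (hw : ∀ c, 0 ≤ w c) (hpos : ∃ c, 0 < w c) {e : (ι → κ) → ℝ} (he : ∀ q, 0 < e q) :
    0 < ∑ q : ι → κ, (∏ i, w (q i)) * e q := by
  obtain ⟨c, hc⟩ := hpos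
  refine Finset.sum_pos' (fun q _ => ?_) ⟨fun _ => c, Finset.mem_univ _, ?_⟩
  · exact mul_nonneg (Finset.prod_nonneg fun i _ => hw _) (he q).le
  · exact mul_pos (Finset.prod_pos fun i _ => hc) (he _)

lemma exists_binomial_weight_pos (K : ℕ) {p : ℝ} (hp1 : p ≤ 1) :
    ∃ c : Fin (K + 1), 0 < (K.choose c : ℝ) * p ^ (c : ℕ) * (1 - p) ^ (K - c) := by
  rcases hp1.lt_or_eq with hp1 | rfl
  · exact ⟨0, by simpa using pow_pos (sub_pos.mpr hp1) K⟩
  · exact ⟨Fin.last K, by simp⟩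

theorem renyi_binomial_mixture_closed_form_general (α K : ℕ) (hα : 1 < α)
    (p : ℝ) (hp0 : 0 ≤ p) (hp1 : p ≤ 1) (σ : ℝ) (hσ : 0 < σ) :
    Real.exp (((α : ℝ) - 1) * ((1 / ((α : ℝ) - 1)) * Real.log (∫ x,
        ((∑ c ∈ Finset.range (K + 1),
            (K.choose c : ℝ) * p ^ c * (1 - p) ^ (K - c) *
              gaussianPDFReal c ⟨σ ^ 2, sq_nonneg σ⟩ x) /
          gaussianPDFReal 0 ⟨σ ^ 2, sq_nonneg σ⟩ x) ^ (α : ℝ)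
        ∂(gaussianReal 0 ⟨σ ^ 2, sq_nonneg σ⟩)))) =
      ∑ c : Fin α → Fin (K + 1),
        (∏ i, (K.choose (c i) : ℝ) * p ^ (c i : ℕ) * (1 - p) ^ (K - (c i : ℕ))) *
          Real.exp (((∑ i, ((c i : ℕ) : ℝ)) ^ 2 - ∑ i, ((c i : ℕ) : ℝ) ^ 2) /
            (2 * σ ^ 2)) := by
  have hv : (⟨σ ^ 2, sq_nonneg σ⟩ : ℝ≥0) ≠ 0 :=
    ne_of_gt (NNReal.coe_pos.mp (pow_pos hσ 2))
  have hα' : (α : ℝ) - 1 ≠ 0 := sub_ne_zero.mpr (by exact_mod_cast hα.ne')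
  rw [← mul_assoc, mul_one_div_cancel hα', one_mul]
  simp_rw [Real.rpow_natCast, Finset.sum_range]
  rw [integral_gaussianMixture_div_gaussianPDFReal_zero_pow hv]
  exact exp_log (sum_pi_prod_mul_pos (fun c => by positivity)
    (exists_binomial_weight_pos K hp1) fun q => exp_pos _)

/-- Closed form for `exp((α−1) R_α(N(Bin(K,p), σ²), N(0, σ²)))` for integers `α > 1`, `K ≥ 1`,
where `N(Bin(K,p), σ²) = Σ_{c=0}^K Pr[Bin(K,p)=c]·N(c,σ²)`:
it equals `E_{c₁,…,c_α i.i.d. Bin(K,p)}[exp(((Σ_i c_i)² − Σ_i c_i²)/(2σ²))]`. -/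
theorem renyi_binomial_mixture_closed_form (α K : ℕ) (hα : 1 < α) (hK : 1 ≤ K)
    (p : ℝ) (hp0 : 0 ≤ p) (hp1 : p ≤ 1) (σ : ℝ) (hσ : 0 < σ) :
    Real.exp (((α : ℝ) - 1) * ((1 / ((α : ℝ) - 1)) * Real.log (∫ x,
        ((∑ c ∈ Finset.range (K + 1),
            (K.choose c : ℝ) * p ^ c * (1 - p) ^ (K - c) *
              gaussianPDFReal c ⟨σ ^ 2, sq_nonneg σ⟩ x) /
          gaussianPDFReal 0 ⟨σ ^ 2, sq_nonneg σ⟩ x) ^ (α : ℝ)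
        ∂(gaussianReal 0 ⟨σ ^ 2, sq_nonneg σ⟩)))) =
      ∑ c : Fin α → Fin (K + 1),
        (∏ i, (K.choose (c i) : ℝ) * p ^ (c i : ℕ) * (1 - p) ^ (K - (c i : ℕ))) *
          Real.exp (((∑ i, ((c i : ℕ) : ℝ)) ^ 2 - ∑ i, ((c i : ℕ) : ℝ) ^ 2) /
            (2 * σ ^ 2)) :=
  renyi_binomial_mixture_closed_form_general α K hα p hp0 hp1 σ hσ
end

section
/- Noise comparison for binomial versus Bernoulli Gaussian mixtures (Lemma conj-ub): for integers α > 1 and K ≥ 1, p ∈ [0,1], σ > 0, the α-Rényi divergence satisfies R_α( N(Bin(K,p), K²σ²), N(0, K²σ²) ) ≤ R_α( N(Bern(p), σ²), N(0, σ²) ). -/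
/-!
Let `L` be the likelihood ratio of a Gaussian mixture `∑ wᵢ 𝓝(aᵢ, v)` against `𝓝(0, v)`, so that
`exp ((α - 1) R_α)` is `𝔼[L ^ α]` under `𝓝(0, v)`. Since `L · φ_μ = ∑ wᵢ e^{aᵢ μ / v} φ_{μ + aᵢ}`,
the moments `M_n(μ) = 𝔼_{𝓝(μ, v)}[L ^ n]` satisfy `M_{n+1}(μ) = ∑ wᵢ e^{aᵢ μ / v} M_n(μ + aᵢ)`,
and by induction `t ↦ e^{t μ / v} M_n(μ + t)` is convex. If the `aᵢ` lie in `[0, R]` with mean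
`q R`, bounding this convex function by its chord over `[0, R]` and inducting on `n` shows that
`M_n` is dominated by the moment of the two-point mixture `(1 - q) 𝓝(0, v) + q 𝓝(R, v)`.
For `Bin(K, p)` with variance `K²σ²` this is the mixture with `R = K`, `q = p`, which the
substitution `x ↦ K x` turns into the Bernoulli mixture with variance `σ²`.
-/

open MeasureTheory ProbabilityTheory Set Finset Real
open scoped NNReal

theorem ConvexOn.finsetSum {𝕜 E β ι : Type*} [Semiring 𝕜] [PartialOrder 𝕜] [AddCommMonoid E]
    [AddCommMonoid β] [PartialOrder β] [IsOrderedAddMonoid β] [SMul 𝕜 E] [DistribMulAction 𝕜 β]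
    {D : Set E} (hD : Convex 𝕜 D) {s : Finset ι} {f : ι → E → β}
    (hf : ∀ i ∈ s, ConvexOn 𝕜 D (f i)) : ConvexOn 𝕜 D fun x => ∑ i ∈ s, f i x := by
  induction s using Finset.cons_induction with
  | empty => exact ⟨hD, fun _ _ _ _ _ _ _ _ _ => by simp⟩
  | cons i s _ ih =>
    simp only [sum_cons]
    exact (hf i (mem_cons_self i s)).add (ih fun j hj => hf j (mem_cons_of_mem hj))

theorem ConvexOn.sum_mul_le_of_mem_Icc {ι : Type*} {s : Finset ι} {w a : ι → ℝ} {g : ℝ → ℝ}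
    {R q : ℝ} (hg : ConvexOn ℝ (Icc 0 R) g) (hR : 0 < R) (hw : ∀ i ∈ s, 0 ≤ w i)
    (ha : ∀ i ∈ s, a i ∈ Icc 0 R) (hsum : ∑ i ∈ s, w i = 1) (hmean : ∑ i ∈ s, w i * a i = q * R) :
    ∑ i ∈ s, w i * g (a i) ≤ (1 - q) * g 0 + q * g R := by
  have hchord : ∀ i ∈ s, g (a i) ≤ (1 - a i / R) * g 0 + a i / R * g R := fun i hi => by
    obtain ⟨ha0, haR⟩ := ha i hi
    have h := hg.2 (left_mem_Icc.2 hR.le) (right_mem_Icc.2 hR.le)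
      (sub_nonneg.2 ((div_le_one hR).2 haR)) (div_nonneg ha0 hR.le) (sub_add_cancel 1 _)
    rwa [smul_eq_mul, smul_eq_mul, mul_zero, zero_add, div_mul_cancel₀ _ hR.ne'] at h
  calc ∑ i ∈ s, w i * g (a i) ≤ ∑ i ∈ s, w i * ((1 - a i / R) * g 0 + a i / R * g R) :=
        sum_le_sum fun i hi => mul_le_mul_of_nonneg_left (hchord i hi) (hw i hi)
    _ = (∑ i ∈ s, w i - (∑ i ∈ s, w i * a i) / R) * g 0 + (∑ i ∈ s, w i * a i) / R * g R := by
        simp only [sum_div, ← sum_sub_distrib, sum_mul, ← sum_add_distrib]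
        exact sum_congr rfl fun i _ => by ring
    _ = (1 - q) * g 0 + q * g R := by rw [hsum, hmean, mul_div_cancel_right₀ _ hR.ne']

noncomputable section

variable {ι : Type*} (s : Finset ι) (w a : ι → ℝ) (v : ℝ≥0)

/-- The likelihood ratio of the mixture `∑ i ∈ s, w i • 𝓝(a i, v)` against `𝓝(0, v)`. -/
def mixtureLR (x : ℝ) : ℝ :=
  ∑ i ∈ s, w i * exp ((a i * x - a i ^ 2 / 2) / v)

def mixtureMoment (n : ℕ) (μ : ℝ) : ℝ :=
  ∫ x, mixtureLR s w a v x ^ n * gaussianPDFReal μ v x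

variable {s w a v}

theorem exp_mul_gaussianPDFReal (hv : v ≠ 0) (c μ x : ℝ) :
    exp ((c * x - c ^ 2 / 2) / v) * gaussianPDFReal μ v x
      = exp (c * μ / v) * gaussianPDFReal (μ + c) v x := by
  have hv0 : (0 : ℝ) < v := by positivity
  simp only [gaussianPDFReal]
  rw [mul_left_comm, ← exp_add, mul_left_comm, ← exp_add]
  congr 2
  field_simp
  ring

theorem mixtureLR_pow_succ_mul_gaussianPDFReal (hv : v ≠ 0) (n : ℕ) (μ x : ℝ) :
    mixtureLR s w a v x ^ (n + 1) * gaussianPDFReal μ v x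
      = ∑ i ∈ s, w i * exp (a i * μ / v)
          * (mixtureLR s w a v x ^ n * gaussianPDFReal (μ + a i) v x) := by
  rw [pow_succ, mul_assoc, mixtureLR, sum_mul, mul_sum]
  refine sum_congr rfl fun i _ => ?_
  rw [mul_assoc, exp_mul_gaussianPDFReal hv]
  ring

theorem integrable_mixtureLR_pow_mul_gaussianPDFReal (hv : v ≠ 0) (n : ℕ) (μ : ℝ) :
    Integrable fun x => mixtureLR s w a v x ^ n * gaussianPDFReal μ v x := by
  induction n generalizing μ with
  | zero => simpa using integrable_gaussianPDFReal μ v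
  | succ n ih =>
    simp_rw [mixtureLR_pow_succ_mul_gaussianPDFReal hv]
    exact integrable_finsetSum _ fun i _ => (ih _).const_mul _

theorem mixtureMoment_zero (hv : v ≠ 0) (μ : ℝ) : mixtureMoment s w a v 0 μ = 1 := by
  simpa [mixtureMoment] using integral_gaussianPDFReal_eq_one μ hv

theorem mixtureMoment_succ (hv : v ≠ 0) (n : ℕ) (μ : ℝ) :
    mixtureMoment s w a v (n + 1) μ
      = ∑ i ∈ s, w i * exp (a i * μ / v) * mixtureMoment s w a v n (μ + a i) := by
  simp_rw [mixtureMoment, mixtureLR_pow_succ_mul_gaussianPDFReal hv, ← integral_const_mul]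
  exact integral_finsetSum _ fun i _ =>
    (integrable_mixtureLR_pow_mul_gaussianPDFReal hv n _).const_mul _

theorem mixtureLR_eq_sum_div (hv : v ≠ 0) (x : ℝ) :
    mixtureLR s w a v x = (∑ i ∈ s, w i * gaussianPDFReal (a i) v x) / gaussianPDFReal 0 v x := by
  rw [eq_div_iff (gaussianPDFReal_pos 0 v x hv).ne', mixtureLR, sum_mul]
  refine sum_congr rfl fun i _ => ?_
  rw [mul_assoc, exp_mul_gaussianPDFReal hv]
  simp

theorem mixtureMoment_eq_integral_gaussianReal (hv : v ≠ 0) (n : ℕ) (μ : ℝ) :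
    mixtureMoment s w a v n μ = ∫ x, mixtureLR s w a v x ^ n ∂gaussianReal μ v := by
  simp_rw [integral_gaussianReal_eq_integral_smul hv, smul_eq_mul, mul_comm, mixtureMoment]

theorem mixtureLR_pos (hw : ∀ i ∈ s, 0 ≤ w i) (hsum : ∑ i ∈ s, w i = 1) (x : ℝ) :
    0 < mixtureLR s w a v x := by
  obtain ⟨i, hi, hwi⟩ : ∃ i ∈ s, (0 : ι → ℝ) i < w i :=
    exists_lt_of_sum_lt (by simp [hsum])
  exact sum_pos' (fun j hj => mul_nonneg (hw j hj) (exp_pos _).le)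
    ⟨i, hi, mul_pos hwi (exp_pos _)⟩

theorem mixtureMoment_pos (hv : v ≠ 0) (hw : ∀ i ∈ s, 0 ≤ w i) (hsum : ∑ i ∈ s, w i = 1)
    (n : ℕ) (μ : ℝ) : 0 < mixtureMoment s w a v n μ := by
  have hpos : ∀ x, 0 < mixtureLR s w a v x ^ n * gaussianPDFReal μ v x := fun x =>
    mul_pos (pow_pos (mixtureLR_pos hw hsum x) n) (gaussianPDFReal_pos μ v x hv)
  rw [mixtureMoment, integral_pos_iff_support_of_nonneg (fun x => (hpos x).le)
    (integrable_mixtureLR_pow_mul_gaussianPDFReal hv n μ),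
    Function.support_eq_univ fun x => (hpos x).ne']
  simp

theorem mixtureMoment_const_mul (hv : v ≠ 0) {c : ℝ} (hc : c ≠ 0) (n : ℕ) (μ : ℝ) :
    mixtureMoment s w (fun i => c * a i) (.mk (c ^ 2) (sq_nonneg c) * v) n (c * μ)
      = mixtureMoment s w a v n μ := by
  have hcv : (.mk (c ^ 2) (sq_nonneg c) * v : ℝ≥0) ≠ 0 :=
    mul_ne_zero (fun h => hc (pow_eq_zero_iff two_ne_zero |>.1 (congrArg NNReal.toReal h))) hv
  have hLR : ∀ x, mixtureLR s w (fun i => c * a i) (.mk (c ^ 2) (sq_nonneg c) * v) (c * x)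
      = mixtureLR s w a v x := fun x => by
    refine sum_congr rfl fun i _ => ?_
    congr 2
    simp only [NNReal.coe_mul, NNReal.coe_mk]
    field_simp
  rw [mixtureMoment_eq_integral_gaussianReal hcv, mixtureMoment_eq_integral_gaussianReal hv,
    ← gaussianReal_map_const_mul, integral_map (by fun_prop) (by unfold mixtureLR; fun_prop)]
  simp_rw [hLR]

theorem convexOn_exp_mul_mixtureMoment (hv : v ≠ 0) (hw : ∀ i ∈ s, 0 ≤ w i) (n : ℕ) (μ : ℝ) :
    ConvexOn ℝ univ fun t => exp (t * μ / v) * mixtureMoment s w a v n (μ + t) := by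
  induction n generalizing μ with
  | zero =>
    simp_rw [mixtureMoment_zero hv, mul_one]
    refine (convexOn_exp.comp_linearMap ((μ / v) • LinearMap.id)).congr fun t _ => ?_
    simp only [Function.comp_apply, LinearMap.smul_apply, LinearMap.id_apply, smul_eq_mul]
    ring_nf
  | succ n ih =>
    have hrec : (fun t => exp (t * μ / v) * mixtureMoment s w a v (n + 1) (μ + t))
        = fun t => ∑ i ∈ s, (w i * exp (a i * μ / v)) •
            (exp (t * (μ + a i) / v) * mixtureMoment s w a v n (μ + a i + t)) := by
      ext t
      rw [mixtureMoment_succ hv, mul_sum]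
      refine sum_congr rfl fun i _ => ?_
      rw [smul_eq_mul, add_right_comm]
      have hexp : exp (t * μ / v) * exp (a i * (μ + t) / v)
          = exp (a i * μ / v) * exp (t * (μ + a i) / v) := by
        rw [← exp_add, ← exp_add]
        ring_nf
      linear_combination w i * mixtureMoment s w a v n (μ + a i + t) * hexp
    rw [hrec]
    exact ConvexOn.finsetSum convex_univ fun i hi =>
      (ih _).smul (mul_nonneg (hw i hi) (exp_pos _).le)

theorem mixtureMoment_le_twoPoint (hv : v ≠ 0) (hw : ∀ i ∈ s, 0 ≤ w i) {R q : ℝ} (hR : 0 < R)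
    (ha : ∀ i ∈ s, a i ∈ Icc 0 R) (hsum : ∑ i ∈ s, w i = 1)
    (hmean : ∑ i ∈ s, w i * a i = q * R) (n : ℕ) (μ : ℝ) :
    mixtureMoment s w a v n μ ≤ mixtureMoment univ ![1 - q, q] ![0, R] v n μ := by
  have hq : q = (∑ i ∈ s, w i * a i) / R := by rw [hmean, mul_div_cancel_right₀ _ hR.ne']
  have hq0 : 0 ≤ q :=
    hq ▸ div_nonneg (sum_nonneg fun i hi => mul_nonneg (hw i hi) (ha i hi).1) hR.le
  have hq1 : q ≤ 1 := by
    rw [hq, div_le_one hR, ← mul_one R, ← hsum, mul_sum]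
    exact sum_le_sum fun i hi => by nlinarith [hw i hi, (ha i hi).2]
  induction n generalizing μ with
  | zero => rw [mixtureMoment_zero hv, mixtureMoment_zero hv]
  | succ n ih =>
    set g := fun t => exp (t * μ / v) * mixtureMoment s w a v n (μ + t)
    have hg : ConvexOn ℝ (Icc 0 R) g :=
      (convexOn_exp_mul_mixtureMoment hv hw n μ).subset (subset_univ _) (convex_Icc 0 R)
    calc mixtureMoment s w a v (n + 1) μ = ∑ i ∈ s, w i * g (a i) := by
          rw [mixtureMoment_succ hv]
          exact sum_congr rfl fun i _ => mul_assoc _ _ _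
      _ ≤ (1 - q) * g 0 + q * g R := hg.sum_mul_le_of_mem_Icc hR hw ha hsum hmean
      _ ≤ (1 - q) * mixtureMoment univ ![1 - q, q] ![0, R] v n μ
            + q * (exp (R * μ / v) * mixtureMoment univ ![1 - q, q] ![0, R] v n (μ + R)) := by
          simp only [g, zero_mul, zero_div, exp_zero, one_mul, add_zero]
          gcongr <;> apply ih
      _ = mixtureMoment univ ![1 - q, q] ![0, R] v (n + 1) μ := by
          simp [mixtureMoment_succ hv, Fin.sum_univ_two, mul_assoc]

theorem integral_rpow_sum_mul_gaussianPDFReal_div (hv : v ≠ 0) (n : ℕ) :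
    ∫ x, ((∑ i ∈ s, w i * gaussianPDFReal (a i) v x) / gaussianPDFReal 0 v x) ^ (n : ℝ)
        ∂gaussianReal 0 v = mixtureMoment s w a v n 0 := by
  simp_rw [mixtureMoment_eq_integral_gaussianReal hv, mixtureLR_eq_sum_div hv, rpow_natCast]

end

open Polynomial in
theorem sum_range_choose_mul_pow_mul_one_sub_pow (p : ℝ) (K : ℕ) :
    ∑ c ∈ range (K + 1), (K.choose c : ℝ) * p ^ c * (1 - p) ^ (K - c) = 1 := by
  simpa [eval_finsetSum, bernsteinPolynomial] using
    congrArg (eval p) (bernsteinPolynomial.sum ℝ K)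

open Polynomial in
theorem sum_range_choose_mul_pow_mul_one_sub_pow_mul (p : ℝ) (K : ℕ) :
    ∑ c ∈ range (K + 1), (K.choose c : ℝ) * p ^ c * (1 - p) ^ (K - c) * c = p * K := by
  have h := congrArg (eval p) (bernsteinPolynomial.sum_smul ℝ K)
  simp only [eval_finsetSum, bernsteinPolynomial, eval_mul, eval_pow, eval_X, eval_sub, eval_one,
    eval_natCast, nsmul_eq_mul] at h
  rw [mul_comm p, ← h]
  exact sum_congr rfl fun c _ => by ring

/-- Lemma (conj-ub): for integers `α > 1`, `K ≥ 1`, `p ∈ [0,1]`, `σ > 0`,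
`R_α(N(Bin(K,p), K²σ²), N(0, K²σ²)) ≤ R_α(N(Bern(p), σ²), N(0, σ²))`, where `N(X, v)`
denotes the Gaussian mixture `Σ_c Pr[X=c]·N(c, v)` and Rényi divergence is expressed
via densities. -/
theorem renyi_binomial_le_bernoulli (α K : ℕ) (hα : 1 < α) (hK : 1 ≤ K)
    (p : ℝ) (hp0 : 0 ≤ p) (hp1 : p ≤ 1) (σ : ℝ) (hσ : 0 < σ) :
    (1 / ((α : ℝ) - 1)) * Real.log (∫ x,
        ((∑ c ∈ Finset.range (K + 1),
            (K.choose c : ℝ) * p ^ c * (1 - p) ^ (K - c) *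
              gaussianPDFReal c ⟨(K : ℝ) ^ 2 * σ ^ 2,
                mul_nonneg (sq_nonneg _) (sq_nonneg σ)⟩ x) /
          gaussianPDFReal 0 ⟨(K : ℝ) ^ 2 * σ ^ 2,
            mul_nonneg (sq_nonneg _) (sq_nonneg σ)⟩ x) ^ (α : ℝ)
        ∂(gaussianReal 0 ⟨(K : ℝ) ^ 2 * σ ^ 2,
            mul_nonneg (sq_nonneg _) (sq_nonneg σ)⟩)) ≤
      (1 / ((α : ℝ) - 1)) * Real.log (∫ x,
        (((1 - p) * gaussianPDFReal 0 ⟨σ ^ 2, sq_nonneg σ⟩ x +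
            p * gaussianPDFReal 1 ⟨σ ^ 2, sq_nonneg σ⟩ x) /
          gaussianPDFReal 0 ⟨σ ^ 2, sq_nonneg σ⟩ x) ^ (α : ℝ)
        ∂(gaussianReal 0 ⟨σ ^ 2, sq_nonneg σ⟩)) := by
  have hK0 : (0 : ℝ) < K := by exact_mod_cast hK
  have hvσ : (⟨σ ^ 2, sq_nonneg σ⟩ : ℝ≥0) ≠ 0 := fun h =>
    pow_ne_zero 2 hσ.ne' (congrArg NNReal.toReal h)
  have hvK : (⟨(K : ℝ) ^ 2 * σ ^ 2, mul_nonneg (sq_nonneg _) (sq_nonneg σ)⟩ : ℝ≥0) ≠ 0 :=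
    fun h => mul_ne_zero (pow_ne_zero 2 hK0.ne') (pow_ne_zero 2 hσ.ne') (congrArg NNReal.toReal h)
  have hB : ∀ c ∈ range (K + 1), 0 ≤ (K.choose c : ℝ) * p ^ c * (1 - p) ^ (K - c) :=
    fun c _ => by have := sub_nonneg.2 hp1; positivity
  have hbern := integral_rpow_sum_mul_gaussianPDFReal_div (s := univ) (w := ![1 - p, p])
    (a := ![0, 1]) hvσ α
  simp only [Fin.sum_univ_two, Matrix.cons_val_zero, Matrix.cons_val_one] at hbern
  have hscale : mixtureMoment univ ![1 - p, p] ![0, (K : ℝ)]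
      ⟨(K : ℝ) ^ 2 * σ ^ 2, mul_nonneg (sq_nonneg _) (sq_nonneg σ)⟩ α 0
      = mixtureMoment univ ![1 - p, p] ![0, 1] ⟨σ ^ 2, sq_nonneg σ⟩ α 0 := by
    rw [← mixtureMoment_const_mul hvσ hK0.ne' α 0]
    congr 1
    · ext i; fin_cases i <;> simp
    · simp
  rw [integral_rpow_sum_mul_gaussianPDFReal_div hvK, hbern, ← hscale]
  gcongr
  · exact one_div_nonneg.2 (sub_nonneg.2 (Nat.one_le_cast.2 hα.le))
  · exact mixtureMoment_pos hvK hB (sum_range_choose_mul_pow_mul_one_sub_pow p K) α 0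
  · exact mixtureMoment_le_twoPoint hvK hB hK0
      (fun c hc => ⟨Nat.cast_nonneg c, Nat.cast_le.2 (Nat.lt_succ_iff.1 (mem_range.1 hc))⟩)
      (sum_range_choose_mul_pow_mul_one_sub_pow p K) (sum_range_choose_mul_pow_mul_one_sub_pow_mul p K) α 0
end

section
/- Monotonicity of Rényi divergence of mean-shifted Gaussians in the noise parameter: for fixed mean-distribution X (a random variable on ℝ with bounded support) and α > 1, the map σ ↦ R_α( N(X, σ²), N(0, σ²) ) is non-increasing on (0, ∞), where N(X, σ²) is the Gaussian mixture with mean distributed as X. -/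
/-!
Substituting `x = σ z`, the Rényi moment at noise level `σ` becomes `E (H_{1/σ}(Z) ^ α)` for
`Z ∼ N(0, 1)`, where `H_t` is the density of `N(t X, 1)` with respect to `N(0, 1)`. Shrinking `t`
to `t r` with `r ^ 2 + τ ^ 2 = 1` smooths this density by Mehler's formula
`H_{t r}(x) = E H_t(r x + τ W)`, `W ∼ N(0, 1)`. Jensen's inequality for `u ↦ u ^ α` and the
rotation invariance of `N(0, 1) ⊗ N(0, 1)` then give `E H_{t r}(Z) ^ α ≤ E H_t(Z) ^ α`, so the
moment increases with `t = 1/σ`.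
-/

open MeasureTheory ProbabilityTheory Real
open scoped NNReal

local notation "γ" => gaussianReal 0 1

lemma integral_exp_add_mul_gaussianReal (a b : ℝ) :
    ∫ w, rexp (a + b * w) ∂γ = rexp (a + b ^ 2 / 2) := by
  have h := congrFun (mgf_id_gaussianReal (μ := 0) (v := 1)) b
  simp only [mgf, id, zero_mul, zero_add, NNReal.coe_one, one_mul] at h
  simp_rw [exp_add, integral_const_mul, h]

lemma integrable_exp_mul_abs_gaussianReal (μ : ℝ) (v : ℝ≥0) (c : ℝ) :
    Integrable (fun z => rexp (c * |z|)) (gaussianReal μ v) := by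
  refine ((integrable_exp_mul_gaussianReal c).add (integrable_exp_mul_gaussianReal (-c))).mono'
    (by fun_prop) (.of_forall fun z => ?_)
  rw [norm_of_nonneg (exp_pos _).le]
  rcases abs_choice z with h | h <;> rw [h]
  · exact le_add_of_nonneg_right (exp_pos _).le
  · rw [mul_neg, ← neg_mul]
    exact le_add_of_nonneg_left (exp_pos _).le

lemma map_rotation_gaussianReal {r τ : ℝ} (h : r ^ 2 + τ ^ 2 = 1) :
    ((γ).prod γ).map (fun p : ℝ × ℝ => r * p.1 + τ * p.2) = γ := by
  have hL : (fun p : ℝ × ℝ => r * p.1 + τ * p.2)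
      = (fun p : ℝ × ℝ => p.1 + p.2) ∘ Prod.map (r * ·) (τ * ·) := rfl
  rw [hL, ← Measure.map_map (by fun_prop) (by fun_prop),
    ← Measure.map_prod_map _ _ (by fun_prop) (by fun_prop),
    gaussianReal_map_const_mul, gaussianReal_map_const_mul]
  change _ ∗ _ = _
  rw [gaussianReal_conv_gaussianReal]
  congr
  · simp
  · ext; simp [h]

lemma integrable_comp_rotation {f : ℝ → ℝ} (hf : Integrable f γ) {r τ : ℝ}
    (h : r ^ 2 + τ ^ 2 = 1) :
    Integrable (fun p : ℝ × ℝ => f (r * p.1 + τ * p.2)) ((γ).prod γ) := by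
  rw [← map_rotation_gaussianReal h] at hf
  exact hf.comp_measurable (by fun_prop)

lemma integral_integral_comp_rotation {f : ℝ → ℝ} (hf : Integrable f γ) {r τ : ℝ}
    (h : r ^ 2 + τ ^ 2 = 1) :
    ∫ x, ∫ w, f (r * x + τ * w) ∂γ ∂γ = ∫ y, f y ∂γ := by
  rw [← integral_prod (fun p : ℝ × ℝ => f (r * p.1 + τ * p.2)) (integrable_comp_rotation hf h)]
  conv_rhs => rw [← map_rotation_gaussianReal h]
  rw [integral_map (by fun_prop) (by rw [map_rotation_gaussianReal h]; exact hf.1)]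

/-- The density of `N(t X, 1)` with respect to `N(0, 1)` at `z`, where `X ∼ ν`. -/
noncomputable def mixtureRatio (ν : Measure ℝ) (t z : ℝ) : ℝ :=
  ∫ m, rexp (t * m * z - t ^ 2 * m ^ 2 / 2) ∂ν

noncomputable def mixtureRatioMoment (ν : Measure ℝ) (α t : ℝ) : ℝ :=
  ∫ z, mixtureRatio ν t z ^ α ∂γ

section MixtureRatio

variable {ν : Measure ℝ}

lemma integrable_exp_mixtureExponent [IsFiniteMeasure ν] (t z : ℝ) :
    Integrable (fun m => rexp (t * m * z - t ^ 2 * m ^ 2 / 2)) ν := by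
  refine (integrable_const (rexp (z ^ 2 / 2))).mono' (by fun_prop) (.of_forall fun m => ?_)
  rw [norm_of_nonneg (exp_pos _).le, exp_le_exp]
  nlinarith [sq_nonneg (t * m - z)]

lemma measurable_mixtureRatio [SFinite ν] (t : ℝ) : Measurable (mixtureRatio ν t) :=
  (StronglyMeasurable.integral_prod_right' (f := fun p : ℝ × ℝ =>
    rexp (t * p.2 * p.1 - t ^ 2 * p.2 ^ 2 / 2)) (by fun_prop)).measurable

lemma mixtureRatio_pos [IsFiniteMeasure ν] [NeZero ν] (t z : ℝ) : 0 < mixtureRatio ν t z :=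
  integral_exp_pos (integrable_exp_mixtureExponent t z)

/-- Mehler's formula for the Ornstein–Uhlenbeck semigroup. -/
lemma mixtureRatio_mul_eq_integral [IsFiniteMeasure ν] {r τ : ℝ} (h : r ^ 2 + τ ^ 2 = 1)
    (t x : ℝ) : mixtureRatio ν (t * r) x = ∫ w, mixtureRatio ν t (r * x + τ * w) ∂γ := by
  have hsplit m w : t * m * (r * x + τ * w) - t ^ 2 * m ^ 2 / 2
      = (t * m * r * x - t ^ 2 * m ^ 2 / 2) + t * m * τ * w := by ring
  have hinner m : ∫ w, rexp (t * m * (r * x + τ * w) - t ^ 2 * m ^ 2 / 2) ∂γ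
      = rexp (t * r * m * x - (t * r) ^ 2 * m ^ 2 / 2) := by
    simp_rw [hsplit, integral_exp_add_mul_gaussianReal]
    congr 1
    linear_combination (t ^ 2 * m ^ 2 / 2) * h
  have hint : Integrable (Function.uncurry fun m w =>
      rexp (t * m * (r * x + τ * w) - t ^ 2 * m ^ 2 / 2)) (ν.prod γ) := by
    refine (integrable_prod_iff (by fun_prop)).2 ⟨.of_forall fun m => ?_, ?_⟩
    · simp_rw [Function.uncurry_apply_pair, hsplit, exp_add]
      exact (integrable_exp_mul_gaussianReal _).const_mul _
    · simp_rw [Function.uncurry_apply_pair, norm_of_nonneg (exp_pos _).le, hinner]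
      exact integrable_exp_mixtureExponent (t * r) x
  simp_rw [mixtureRatio, ← integral_integral_swap hint, hinner]

variable [IsProbabilityMeasure ν] {C : ℝ}

lemma mixtureRatio_rpow_le (hC : ∀ᵐ m ∂ν, |m| ≤ C) {α : ℝ} (hα : 0 ≤ α) (t z : ℝ) :
    mixtureRatio ν t z ^ α ≤ rexp (α * |t| * C * |z|) := by
  have hle : mixtureRatio ν t z ≤ rexp (|t| * C * |z|) := by
    refine (integral_mono_ae (integrable_exp_mixtureExponent t z)
      (integrable_const (rexp (|t| * C * |z|))) ?_).trans (by simp)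
    filter_upwards [hC] with m hm
    rw [exp_le_exp]
    have : t * m * z ≤ |t| * C * |z| := by
      calc t * m * z ≤ |t| * |m| * |z| := by rw [← abs_mul, ← abs_mul]; exact le_abs_self _
        _ ≤ |t| * C * |z| := by gcongr
    nlinarith [sq_nonneg (t * m)]
  calc mixtureRatio ν t z ^ α ≤ rexp (|t| * C * |z|) ^ α := by
        gcongr; exact (mixtureRatio_pos t z).le
    _ = rexp (α * |t| * C * |z|) := by rw [← exp_mul]; ring_nf

lemma integrable_mixtureRatio_rpow (hC : ∀ᵐ m ∂ν, |m| ≤ C) {α : ℝ} (hα : 0 ≤ α) (t : ℝ) :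
    Integrable (fun z => mixtureRatio ν t z ^ α) γ := by
  refine (integrable_exp_mul_abs_gaussianReal 0 1 (α * |t| * C)).mono'
    ((measurable_mixtureRatio t).pow_const α).aestronglyMeasurable (.of_forall fun z => ?_)
  rw [norm_of_nonneg (rpow_nonneg (mixtureRatio_pos t z).le _)]
  exact mixtureRatio_rpow_le hC hα t z

lemma mixtureRatioMoment_pos (hC : ∀ᵐ m ∂ν, |m| ≤ C) {α : ℝ} (hα : 0 ≤ α) (t : ℝ) :
    0 < mixtureRatioMoment ν α t := by
  have hpos z : 0 < mixtureRatio ν t z ^ α := rpow_pos_of_pos (mixtureRatio_pos t z) α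
  rw [mixtureRatioMoment, integral_pos_iff_support_of_nonneg (fun z => (hpos z).le)
    (integrable_mixtureRatio_rpow hC hα t)]
  simp [Function.support, fun z => (hpos z).ne']

lemma mixtureRatioMoment_mul_le (hC : ∀ᵐ m ∂ν, |m| ≤ C) {α : ℝ} (hα : 1 ≤ α) {r τ : ℝ}
    (h : r ^ 2 + τ ^ 2 = 1) (t : ℝ) :
    mixtureRatioMoment ν α (t * r) ≤ mixtureRatioMoment ν α t := by
  have hα0 : 0 ≤ α := zero_le_one.trans hα
  have hH := integrable_comp_rotation
    (by simpa using integrable_mixtureRatio_rpow hC zero_le_one t) h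
  have hHα := integrable_comp_rotation (integrable_mixtureRatio_rpow hC hα0 t) h
  have hjensen : ∀ᵐ x ∂γ, mixtureRatio ν (t * r) x ^ α
      ≤ ∫ w, mixtureRatio ν t (r * x + τ * w) ^ α ∂γ := by
    filter_upwards [hH.prod_right_ae, hHα.prod_right_ae] with x hx hxα
    rw [mixtureRatio_mul_eq_integral h]
    exact (convexOn_rpow hα).map_integral_le (continuous_rpow_const hα0).continuousOn
      isClosed_Ici (.of_forall fun w => (mixtureRatio_pos t _).le) hx hxα
  calc mixtureRatioMoment ν α (t * r)
      ≤ ∫ x, ∫ w, mixtureRatio ν t (r * x + τ * w) ^ α ∂γ ∂γ :=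
        integral_mono_ae (integrable_mixtureRatio_rpow hC hα0 _) hHα.integral_prod_left hjensen
    _ = mixtureRatioMoment ν α t :=
        integral_integral_comp_rotation (integrable_mixtureRatio_rpow hC hα0 t) h

lemma mixtureRatioMoment_monotoneOn (hC : ∀ᵐ m ∂ν, |m| ≤ C) {α : ℝ} (hα : 1 ≤ α) :
    MonotoneOn (mixtureRatioMoment ν α) (Set.Ioi 0) := by
  intro s hs t ht hst
  have hr : (s / t) ^ 2 ≤ 1 :=
    pow_le_one₀ (div_nonneg (le_of_lt hs) (le_of_lt ht)) (div_le_one_of_le₀ hst (le_of_lt ht))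
  have h : (s / t) ^ 2 + √(1 - (s / t) ^ 2) ^ 2 = 1 := by rw [sq_sqrt (by linarith)]; ring
  simpa [mul_div_cancel₀ s (ne_of_gt ht)] using mixtureRatioMoment_mul_le hC hα h t

end MixtureRatio

lemma gaussianPDFReal_div_gaussianPDFReal_zero_s15 {σ : ℝ} (hσ : σ ≠ 0) (m x : ℝ) :
    gaussianPDFReal m ⟨σ ^ 2, sq_nonneg σ⟩ x / gaussianPDFReal 0 ⟨σ ^ 2, sq_nonneg σ⟩ x
      = rexp (σ⁻¹ * m * (x / σ) - σ⁻¹ ^ 2 * m ^ 2 / 2) := by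
  simp only [gaussianPDFReal]
  dsimp only [NNReal.toReal]
  rw [mul_div_mul_left _ _ (by positivity), ← exp_sub]
  congr 1
  field_simp
  ring

lemma integral_gaussianPDFReal_div_rpow_eq_mixtureRatioMoment (ν : Measure ℝ)
    {σ : ℝ} (hσ : 0 < σ) (α : ℝ) :
    ∫ x, ((∫ m, gaussianPDFReal m ⟨σ ^ 2, sq_nonneg σ⟩ x ∂ν) /
        gaussianPDFReal 0 ⟨σ ^ 2, sq_nonneg σ⟩ x) ^ α ∂(gaussianReal 0 ⟨σ ^ 2, sq_nonneg σ⟩)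
      = mixtureRatioMoment ν α σ⁻¹ := by
  have hmap : (γ).map (σ * ·) = gaussianReal 0 ⟨σ ^ 2, sq_nonneg σ⟩ := by
    rw [gaussianReal_map_const_mul]
    congr 1
    · simp
    · exact mul_one _
  simp_rw [← integral_div, gaussianPDFReal_div_gaussianPDFReal_zero_s15 hσ.ne', ← hmap,
    (measurableEmbedding_mulLeft₀ hσ.ne').integral_map, mul_div_cancel_left₀ _ hσ.ne']
  rfl

/-- Monotonicity of the Rényi divergence of mean-shifted Gaussian mixtures in the noise
parameter: for a bounded mean distribution `ν` and `α > 1`, the map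
`σ ↦ R_α(N(X, σ²), N(0, σ²))` is non-increasing on `(0, ∞)`. -/
theorem renyi_mixture_antitone_in_sigma (ν : Measure ℝ) [IsProbabilityMeasure ν]
    (hb : ∃ C : ℝ, ∀ᵐ m ∂ν, |m| ≤ C) (α : ℝ) (hα : 1 < α) :
    AntitoneOn (fun σ : ℝ =>
      (1 / (α - 1)) * Real.log (∫ x,
        ((∫ m, gaussianPDFReal m ⟨σ ^ 2, sq_nonneg σ⟩ x ∂ν) /
          gaussianPDFReal 0 ⟨σ ^ 2, sq_nonneg σ⟩ x) ^ α
        ∂(gaussianReal 0 ⟨σ ^ 2, sq_nonneg σ⟩))) (Set.Ioi 0) := by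
  obtain ⟨C, hC⟩ := hb
  intro σ₁ hσ₁ σ₂ hσ₂ hle
  simp only [integral_gaussianPDFReal_div_rpow_eq_mixtureRatioMoment ν hσ₁,
    integral_gaussianPDFReal_div_rpow_eq_mixtureRatioMoment ν hσ₂]
  have hα1 : 0 < α - 1 := sub_pos.2 hα
  gcongr
  · exact mixtureRatioMoment_pos hC (by linarith) _
  · exact mixtureRatioMoment_monotoneOn hC hα.le (Set.mem_Ioi.2 (inv_pos.2 hσ₂))
      (Set.mem_Ioi.2 (inv_pos.2 hσ₁)) (inv_anti₀ hσ₁ hle)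
end
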